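/- (Theorem A.1.4(a), first assertion) An elliptic log canonical system A is minimal if and only if it contains no element of the first kind, i.e. no index i with A i i = -1. -/

import Mathlib

open Matrix

/-- A real matrix is negative definite: `xᵀ A x < 0` for every nonzero `x`. -/
def NegDefMat {V : Type*} [Fintype V] (A : Matrix V V ℝ) : Prop :=
  ∀ x : V → ℝ, x ≠ 0 → x ⬝ᵥ A.mulVec x < 0

/-- A real matrix is negative semidefinite: `xᵀ A x ≤ 0` for every `x`. -/
def NegSemidefMat {V : Type*} [Fintype V] (A : Matrix V V ℝ) : Prop :=
  ∀ x : V → ℝ, x ⬝ᵥ A.mulVec x ≤ 0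

/-- A real symmetric matrix has at most one positive eigenvalue (with multiplicity). -/
def AtMostOnePosEig {V : Type*} [Fintype V] [DecidableEq V] (A : Matrix V V ℝ) : Prop :=
  ∃ hA : A.IsHermitian, Fintype.card {i // 0 < hA.eigenvalues i} ≤ 1

/-- The real matrix associated to an integer matrix. -/
def matReal {V : Type*} (A : Matrix V V ℤ) : Matrix V V ℝ := A.map Int.cast

/-- An at most hyperbolic system of vectors, encoded by its Gram matrix. -/
def IsSystem {V : Type*} [Fintype V] [DecidableEq V] (A : Matrix V V ℤ) : Prop :=
  Nonempty V ∧ A.IsSymm ∧ (∀ i, A i i ≤ -1) ∧ (∀ i j, i ≠ j → 0 ≤ A i j) ∧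
    AtMostOnePosEig (matReal A)

/-- The graph of a system: an edge between `i ≠ j` iff `A i j > 0`. -/
def sysGraph {V : Type*} (A : Matrix V V ℤ) : SimpleGraph V :=
  SimpleGraph.fromRel fun i j => 0 < A i j

/-- The principal submatrix of `A` on a subset `s` of indices. -/
def subMat {V : Type*} (A : Matrix V V ℤ) (s : Finset V) :
    Matrix {i // i ∈ s} {i // i ∈ s} ℤ :=
  A.submatrix Subtype.val Subtype.val

/-- A system is elliptic if its Gram matrix is negative definite over `ℝ`. -/
def IsElliptic {V : Type*} [Fintype V] (A : Matrix V V ℤ) : Prop :=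
  NegDefMat (matReal A)

/-- A system is hyperbolic if it is not negative semidefinite over `ℝ`. -/
def IsHyperbolic {V : Type*} [Fintype V] (A : Matrix V V ℤ) : Prop :=
  ¬ NegSemidefMat (matReal A)

/-- A system is Lanner if it is hyperbolic but every proper subsystem
is negative semidefinite. -/
def IsLanner {V : Type*} [Fintype V] [DecidableEq V] (A : Matrix V V ℤ) : Prop :=
  IsHyperbolic A ∧ ∀ s : Finset V, s ≠ Finset.univ → NegSemidefMat (matReal (subMat A s))

/-- A system is connected parabolic if it is negative semidefinite but not negative
definite over `ℝ` and its graph is connected. -/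
def IsConnParabolic {V : Type*} [Fintype V] (A : Matrix V V ℤ) : Prop :=
  NegSemidefMat (matReal A) ∧ ¬ NegDefMat (matReal A) ∧ (sysGraph A).Connected

/-- A system is log canonical if for every subset `s` of indices whose principal
submatrix is negative definite, the canonical coefficients `α` (the unique solution of
`∑_{j ∈ s} A i j * α j = -A i i - 2` for `i ∈ s`) satisfy `α i ≥ -1` for all `i ∈ s`,
with strict inequality whenever `i` is joined, within the graph of `A` restricted to `s`,
to some `e ∈ s` with `A e e = -1`. -/
def IsLogCanonical {V : Type*} [Fintype V] [DecidableEq V] (A : Matrix V V ℤ) : Prop :=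
  ∀ s : Finset V, NegDefMat (matReal (subMat A s)) →
    ∀ α : V → ℝ, (∀ i ∈ s, ∑ j ∈ s, (A i j : ℝ) * α j = -(A i i : ℝ) - 2) →
      (∀ i ∈ s, -1 ≤ α i) ∧
      (∀ i e : {x // x ∈ s}, A e.val e.val = -1 →
        ((sysGraph A).comap (Subtype.val : {x // x ∈ s} → V)).Reachable i e →
        -1 < α i.val)

/-- An index `e` of the first kind (`A e e = -1`) is contractible if every other
index `i` satisfies `A i e = 0`, or `A i i ≤ -2` and `A i e = 1`. -/
def Contractible {V : Type*} (A : Matrix V V ℤ) (e : V) : Prop :=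
  ∀ i, i ≠ e → A i e = 0 ∨ (A i i ≤ -2 ∧ A i e = 1)

/-- A log canonical system is minimal if it contains no contractible element
of the first kind. -/
def IsMinimal {V : Type*} (A : Matrix V V ℤ) : Prop :=
  ¬ ∃ e, A e e = -1 ∧ Contractible A e

/-!
Let `e` be an element of the first kind and `i ≠ e` with `a := A i e > 0`. Negative
definiteness of the pair `{i, e}` gives `a² < -A i i`. On that pair the canonical
coefficients are explicit, `α i = (A i i + a + 2) / (-A i i - a²)` and `α e = a α i + 1`,
and `i` is adjacent to `e`, so log canonicity forces `α i > -1`, i.e. `a² < a + 2`.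
Hence `a = 1` and then `A i i ≤ -2`: every element of the first kind is contractible.
-/

open Function

section
variable {ι V : Type*} [Fintype ι] [Fintype V]

theorem dotProduct_extend_zero {f : ι → V} (hf : Injective f) (w : V → ℝ) (x : ι → ℝ) :
    w ⬝ᵥ extend f x 0 = (w ∘ f) ⬝ᵥ x := by
  classical
  have hout : ∀ v ∈ Finset.univ, v ∉ Finset.univ.image f → w v * extend f x 0 v = 0 := by
    intro v _ hv
    rw [extend_apply' _ _ _ (by simpa using hv), Pi.zero_apply, mul_zero]
  rw [dotProduct, ← Finset.sum_subset (Finset.subset_univ _) hout,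
    Finset.sum_image hf.injOn]
  simp [dotProduct, hf.extend_apply]

theorem NegDefMat.submatrix {M : Matrix V V ℝ} (hM : NegDefMat M) {f : ι → V}
    (hf : Injective f) : NegDefMat (M.submatrix f f) := by
  intro x hx
  have hy : extend f x 0 ≠ 0 := fun h => hx <| funext fun i => by
    simpa [hf.extend_apply] using congrFun h (f i)
  have hrow : (M *ᵥ extend f x 0) ∘ f = M.submatrix f f *ᵥ x := by
    ext i
    exact dotProduct_extend_zero hf _ x
  have := hM _ hy
  rwa [dotProduct_comm, dotProduct_extend_zero hf, hrow, dotProduct_comm] at this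

variable [DecidableEq V] {M : Matrix V V ℝ}

theorem NegDefMat.diag_neg (hM : NegDefMat M) (i : V) : M i i < 0 := by
  simpa [mulVec_single, single_dotProduct] using hM (Pi.single i 1) (by simp)

theorem NegDefMat.sq_lt_mul_diag (hM : NegDefMat M) (hsymm : M.IsSymm) {i j : V}
    (hij : i ≠ j) : M i j ^ 2 < M i i * M j j := by
  have hii := hM.diag_neg i
  have hji : M j i = M i j := hsymm.apply i j
  have hx : (Pi.single i (M i j) - Pi.single j (M i i) : V → ℝ) ≠ 0 := fun h => by
    simpa [hij.symm, hii.ne] using congrFun h j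
  have := hM _ hx
  simp only [mulVec_sub, mulVec_single, op_smul_eq_smul, dotProduct_sub, dotProduct_smul,
    sub_dotProduct, single_dotProduct, col_apply, smul_eq_mul, hji] at this
  nlinarith
end

section
variable {V : Type*} [Fintype V] [DecidableEq V] {A : Matrix V V ℤ}

theorem IsElliptic.sq_lt_mul_diag (hell : IsElliptic A) (hsymm : A.IsSymm) {i j : V}
    (hij : i ≠ j) : A i j ^ 2 < A i i * A j j := by
  have := NegDefMat.sq_lt_mul_diag hell (hsymm.map _) hij
  simp only [matReal, map_apply] at this
  exact_mod_cast this

theorem IsLogCanonical.sq_lt_add_two (hlc : IsLogCanonical A) (hell : IsElliptic A)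
    (hsymm : A.IsSymm) {i e : V} (he : A e e = -1) (hie : i ≠ e) (hpos : 0 < A i e) :
    A i e ^ 2 < A i e + 2 := by
  have hdet := hell.sq_lt_mul_diag hsymm hie
  rw [he, mul_neg_one] at hdet
  have hd : (0 : ℝ) < -A i i - A i e ^ 2 := by exact_mod_cast sub_pos.2 hdet
  have hei : A e i = A i e := hsymm.apply i e
  set c : ℝ := (A i i + 2 + A i e) / (-A i i - A i e ^ 2) with hc
  let α : V → ℝ := fun v => if v = i then c else A i e * c + 1
  have hrow : (A i i : ℝ) * c + A i e * (A i e * c + 1) = -A i i - 2 := by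
    rw [hc]
    field_simp
    ring
  have hcanon :
      ∀ v ∈ ({i, e} : Finset V), ∑ j ∈ {i, e}, (A v j : ℝ) * α j = -A v v - 2 := by
    simp only [Finset.mem_insert, Finset.mem_singleton, Finset.sum_pair hie]
    rintro v (rfl | rfl)
    · simpa [α, hie.symm] using hrow
    · simp only [α, if_pos rfl, if_neg hie.symm, hei, he]
      push_cast
      ring
  have hadj : ((sysGraph A).comap (Subtype.val : {x // x ∈ ({i, e} : Finset V)} → V)).Reachable
      ⟨i, by simp⟩ ⟨e, by simp⟩ :=
    SimpleGraph.Adj.reachable (by simp [sysGraph, hie, hpos])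
  have hαi := (hlc {i, e} (NegDefMat.submatrix hell Subtype.val_injective) α hcanon).2
    ⟨i, by simp⟩ ⟨e, by simp⟩ he hadj
  have : -1 * (-A i i - A i e ^ 2) < (A i i + 2 + A i e : ℝ) :=
    (lt_div_iff₀ hd).1 (by simpa [α] using hαi)
  have : (A i e : ℝ) ^ 2 < A i e + 2 := by linarith
  exact_mod_cast this

end

/-- Theorem A.1.4(a), first assertion: an elliptic log canonical system is minimal
if and only if it contains no element of the first kind. -/
theorem elliptic_minimal_iff_no_first_kind {V : Type*} [Fintype V] [DecidableEq V]
    (A : Matrix V V ℤ) (hsys : IsSystem A) (hell : IsElliptic A)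
    (hlc : IsLogCanonical A) :
    IsMinimal A ↔ ¬ ∃ i, A i i = -1 := by
  obtain ⟨-, hsymm, -, hoff, -⟩ := hsys
  refine ⟨fun hmin ⟨e, he⟩ => hmin ⟨e, he, fun i hie => ?_⟩,
    fun hno ⟨e, he, _⟩ => hno ⟨e, he⟩⟩
  rcases (hoff i e hie).eq_or_lt with h0 | hpos
  · exact Or.inl h0.symm
  have hone : A i e = 1 := by nlinarith [hlc.sq_lt_add_two hell hsymm he hie hpos]
  have hdet := hell.sq_lt_mul_diag hsymm hie
  rw [hone, he] at hdet
  exact Or.inr ⟨by linarith, hone⟩
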